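/- arXiv:2110.01131 — 2 statements merged into one kernel-verified Lean document; each statement's English description precedes it below -/
import Mathlib

section
/- Let \(\mathfrak{u}\) be an abelian Lie algebra with basis \(u_1,\dots,u_n\), acting on a vector space \(V = V_{-2} \oplus V_0 \oplus V_2\) via a representation \(\rho_0\) (the restriction of the adjoint representation of \(\mathfrak{so}(n+1,1)\) to the nilpotent subalgebra \(\mathfrak{u}=V_2\)), where \([V, V_2] = V_0 \oplus V_2\). Then the map \(J: V_{-2} \to H^n(\mathfrak{u}, V)\) sending \(v \mapsto (u_1^* \wedge \cdots \wedge u_n^*) \otimes v\) is an isomorphism onto the top Lie algebra cohomology \(H^n(\mathfrak{u}, V_{\rho_0})\). -/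
/-! Since `V₋₂` is a complement of `V₀ ⊕ V₂`, it suffices to show that the coboundaries
`im d = ∑ᵢ im ρ₀(uᵢ)` are exactly `[V, V₂] = V₀ ⊕ V₂`; the signs `(-1)^{i+1}` are units and do
not change the images. -/

/-- The top-degree Chevalley–Eilenberg coboundary for an `n`-dimensional abelian Lie
algebra with chosen basis `u₁, …, uₙ` acting on `V` via `ρ` (where `ρ i = ρ₀(uᵢ)`):
an `(n-1)`-cochain is identified with its coefficients `A : Fin n → V`
(`φ = ∑ᵢ (u₁* ∧ ⋯ ∧ ûᵢ* ∧ ⋯ ∧ uₙ*) ⊗ Aᵢ`), and a top cochain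
`(u₁* ∧ ⋯ ∧ uₙ*) ⊗ v` with its value `v ∈ V`; then
`dφ = (u₁* ∧ ⋯ ∧ uₙ*) ⊗ ∑ᵢ (-1)^{i+1} ρ₀(uᵢ) Aᵢ`. -/
noncomputable def ceTopDiff {n : ℕ} {V : Type*} [AddCommGroup V] [Module ℝ V]
    (ρ : Fin n → Module.End ℝ V) : (Fin n → V) →ₗ[ℝ] V :=
  ∑ i : Fin n, ((-1 : ℝ) ^ ((i : ℕ) + 1)) • (ρ i).comp (LinearMap.proj i)

theorem LinearMap.range_sum_comp_proj {ι R M N : Type*} [Fintype ι] [DecidableEq ι]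
    [Semiring R] [AddCommMonoid M] [Module R M] [AddCommMonoid N] [Module R N]
    (f : ι → M →ₗ[R] N) :
    range (∑ i, (f i).comp (proj i)) = ⨆ i, range (f i) := by
  apply le_antisymm
  · rintro _ ⟨x, rfl⟩
    rw [sum_apply]
    exact Submodule.sum_mem _ fun i _ => Submodule.mem_iSup_of_mem i (mem_range_self _ _)
  · refine iSup_le fun i => ?_
    rintro _ ⟨v, rfl⟩
    exact ⟨Pi.single i v, by simp [Pi.single_apply, apply_ite]⟩

theorem range_ceTopDiff {n : ℕ} {V : Type*} [AddCommGroup V] [Module ℝ V]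
    (ρ : Fin n → Module.End ℝ V) :
    LinearMap.range (ceTopDiff ρ) = ⨆ i, LinearMap.range (ρ i) := by
  simp_rw [ceTopDiff, ← LinearMap.smul_comp, LinearMap.range_sum_comp_proj]
  refine iSup_congr fun i => ?_
  exact LinearMap.range_smul (ρ i) _ (pow_ne_zero _ (neg_ne_zero.mpr one_ne_zero))

theorem DirectSum.IsInternal.isCompl_fin_three {R M : Type*} [Semiring R] [AddCommMonoid M]
    [Module R M] {A : Fin 3 → Submodule R M} (h : DirectSum.IsInternal A) :
    IsCompl (A 0) (A 1 ⊔ A 2) := by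
  refine ⟨(iSupIndep_fin_three.mp h.submodule_iSupIndep).1, codisjoint_iff.mpr ?_⟩
  rw [← sup_assoc, ← iSup_fin_three]
  exact h.submodule_iSup_eq_top

/-- for an abelian Lie algebra `𝔲` of dimension `n` acting on
`V = V₋₂ ⊕ V₀ ⊕ V₂` via `ρ₀` with `[V, V₂] = V₀ ⊕ V₂` (the joint image of the basis
operators `ρ₀(uᵢ)` is `V₀ ⊔ V₂`), the map
`J : V₋₂ → Hⁿ(𝔲, V) = (top cochains)/(coboundaries)`, `v ↦ (u₁* ∧ ⋯ ∧ uₙ*) ⊗ v`,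
is an isomorphism (a linear bijection). -/
theorem stmt_0 {n : ℕ} {V : Type*} [AddCommGroup V] [Module ℝ V]
    (Vneg V0 V2 : Submodule ℝ V)
    (ρ : Fin n → Module.End ℝ V)
    (hdirect : DirectSum.IsInternal (![Vneg, V0, V2] : Fin 3 → Submodule ℝ V))
    (hbracket : (⨆ i : Fin n, LinearMap.range (ρ i)) = V0 ⊔ V2) :
    Function.Bijective
      (((LinearMap.range (ceTopDiff ρ)).mkQ).comp Vneg.subtype) := by
  have hcompl : IsCompl (LinearMap.range (ceTopDiff ρ)) Vneg := by
    rw [range_ceTopDiff, hbracket]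
    exact hdirect.isCompl_fin_three.symm
  exact (Submodule.quotientEquivOfIsCompl _ _ hcompl).symm.bijective
end

section
/- For an \(n\)-dimensional abelian Lie algebra \(\mathfrak{u}\) with basis \(u_1,\dots,u_n\) acting on \(V = V_{-2}\oplus V_0 \oplus V_2\) as in the restricted root decomposition, any top-degree cochain \((u_1^* \wedge \cdots \wedge u_n^*)\otimes v\) with \(v \in V_0 \oplus V_2\) is a coboundary in the Chevalley–Eilenberg complex: there exists \(\varphi \in \Hom(\Lambda^{n-1}\mathfrak{u}, V)\) with \(d\varphi = (u_1^*\wedge\cdots\wedge u_n^*)\otimes v\). -/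
/-- if `[V, V₂] = V₀ ⊕ V₂` (the joint image of the operators `ρ₀(uᵢ)`
is `V₀ ⊔ V₂`), then any top cochain `(u₁* ∧ ⋯ ∧ uₙ*) ⊗ v` with `v ∈ V₀ ⊕ V₂` is a
coboundary: there are coefficients `A : Fin n → V` (i.e. an `(n-1)`-cochain
`φ = ∑ᵢ (u₁* ∧ ⋯ ∧ ûᵢ* ∧ ⋯ ∧ uₙ*) ⊗ Aᵢ`) with `dφ = (u₁* ∧ ⋯ ∧ uₙ*) ⊗ v`. -/
theorem stmt_1 {n : ℕ} {V : Type*} [AddCommGroup V] [Module ℝ V]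
    (V0 V2 : Submodule ℝ V)
    (ρ : Fin n → Module.End ℝ V)
    (hbracket : (⨆ i : Fin n, LinearMap.range (ρ i)) = V0 ⊔ V2)
    (v : V) (hv : v ∈ V0 ⊔ V2) :
    ∃ A : Fin n → V, ceTopDiff ρ A = v := by
  rw [← hbracket] at hv
  suffices h : (⨆ i : Fin n, LinearMap.range (ρ i)) ≤ LinearMap.range (ceTopDiff ρ) by
    exact h hv
  refine iSup_le fun i => ?_
  rintro _ ⟨w, rfl⟩
  refine ⟨Pi.single i (((-1 : ℝ) ^ ((i : ℕ) + 1)) • w), ?_⟩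
  simp only [ceTopDiff, LinearMap.sum_apply, LinearMap.smul_apply, LinearMap.comp_apply,
    LinearMap.proj_apply]
  rw [Finset.sum_eq_single i]
  · rw [Pi.single_eq_same, map_smul, smul_smul, ← pow_add, ← two_mul, pow_mul,
      neg_one_sq, one_pow, one_smul]
  · intro j _ hj
    rw [Pi.single_eq_of_ne hj, map_zero, smul_zero]
  · intro h; exact absurd (Finset.mem_univ i) h
end
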